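/- Let m = (m_i^{(a)}) be any finitely supported matrix of nonnegative integers indexed by a ∈ {1,…,n}, i ≥ 1, and define m̂ (indexed by a ∈ {1,…,2n−1}, i ≥ 1) by m̂_i^{(a)} = m̂_i^{(2n−a)} = m_i^{(a)} for a ≤ n−1, m̂_{2i}^{(n)} = m_i^{(n)}, and m̂_j^{(n)} = 0 for odd j. Then cc_A(m̂) = 2·cc_C(m), where cc_C(m) = (1/2)·Σ_{a,b}Σ_{j,k} (α_a|α_b)_C·min(t_b·j, t_a·k)·m_j^{(a)}·m_k^{(b)} is the type C_n quadratic cocharge and cc_A(m̂) = (1/2)·Σ_{a,b}Σ_{j,k} (α_a|α_b)_A·min(j,k)·m̂_j^{(a)}·m̂_k^{(b)} is the type A_{2n−1} quadratic cocharge. -/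
import Mathlib


/- STATEMENT 18: the quadratic cocharge doubles under the transform m ↦ m̂. -/

namespace Stmt18

/-- A finitely supported matrix `(m_i^{(a)})`, indexed by pairs `(a, i)`. -/
abbrev Mat := ℕ × ℕ →₀ ℕ
/-- A finitely supported matrix of partitions `(J^{(a,i)})`, each partition encoded as the
multiset of its parts. -/
abbrev Rig := ℕ × ℕ →₀ Multiset ℕ

/-- Support is contained in `{1,…,N} × {1,2,3,…}`. -/
def supIn (N : ℕ) (m : Mat) : Prop := ∀ q, m q ≠ 0 → 1 ≤ q.1 ∧ q.1 ≤ N ∧ 1 ≤ q.2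
/-- Support is contained in `{1,…,N} × {1,2,3,…}`. -/
def supInJ (N : ℕ) (J : Rig) : Prop := ∀ q, J q ≠ 0 → 1 ≤ q.1 ∧ q.1 ≤ N ∧ 1 ≤ q.2

/-- The normalized bilinear form `(α_a|α_b)` of type `C_n`. -/
def formC (n a b : ℕ) : ℚ :=
  if a = b then (if a = n then 2 else 1)
  else if a + 1 = b ∨ b + 1 = a then (if a = n ∨ b = n then -1 else -(1/2))
  else 0

/-- The scaling factors `t_a` of type `C_n`. -/
def tC (n a : ℕ) : ℕ := if a = n then 1 else 2

/-- The Cartan integers `A_{ab} = 2(α_a|α_b)/(α_a|α_a)` of type `C_n`. -/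
def cartanC (n a b : ℕ) : ℚ := 2 * formC n a b / formC n a a

/-- The bilinear form `(α_a|α_b) = 2δ_{ab} - δ_{|a-b|,1}` of type `A_{2n-1}`
(equal to its Cartan matrix; all scaling factors are 1). -/
def formA (a b : ℕ) : ℚ :=
  if a = b then 2 else if a + 1 = b ∨ b + 1 = a then -1 else 0

/-- The type `C_n` configuration condition for the data `(L, λ)`. -/
def configC (n : ℕ) (lam : ℕ → ℕ) (L m : Mat) : Prop :=
  ∀ a, 1 ≤ a → a ≤ n →
    (m.sum fun q c => (q.2 : ℚ) * c * cartanC n a q.1)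
      = (L.sum fun q c => if q.1 = a then (q.2 : ℚ) * c else 0) - lam a

/-- The type `C_n` vacancy numbers `p_i^{(a)}`. -/
def vacC (n : ℕ) (L m : Mat) (a i : ℕ) : ℚ :=
  (L.sum fun q c => if q.1 = a then ((min i q.2 : ℕ) : ℚ) * c else 0)
  - (m.sum fun q c => formC n a q.1 * ((min (tC n q.1 * i) (tC n a * q.2) : ℕ) : ℚ) * c)

/-- Admissibility in type `C_n`: all vacancy numbers are nonnegative. -/
def admC (n : ℕ) (L m : Mat) : Prop :=
  ∀ a i, 1 ≤ a → a ≤ n → 1 ≤ i → 0 ≤ vacC n L m a i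

/-- The rigging conditions in type `C_n`: `J^{(a,i)}` is a partition contained in an
`m_i^{(a)} × p_i^{(a)}` rectangle. -/
def rigC (n : ℕ) (L m : Mat) (J : Rig) : Prop :=
  ∀ a i, 1 ≤ a → a ≤ n → 1 ≤ i →
    (J (a,i)).card ≤ m (a,i) ∧ ∀ x ∈ J (a,i), 0 < x ∧ (x : ℚ) ≤ vacC n L m a i

/-- The quadratic part of the type `C_n` cocharge. -/
def ccC (n : ℕ) (m : Mat) : ℚ :=
  (1/2) * m.sum fun q c => m.sum fun r d =>
    formC n q.1 r.1 * ((min (tC n r.1 * q.2) (tC n q.1 * r.2) : ℕ) : ℚ) * c * d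

/-- `Σ_{a,i} |J^{(a,i)}|`. -/
def Jsize (J : Rig) : ℚ := J.sum fun _ ms => (ms.sum : ℚ)

/-- The set of type `C_n` rigged configurations for the data `(L, λ)`. -/
def RCC (n : ℕ) (lam : ℕ → ℕ) (L : Mat) : Set (Mat × Rig) :=
  {p | supIn n p.1 ∧ supInJ n p.2 ∧ configC n lam L p.1 ∧ admC n L p.1 ∧
       rigC n L p.1 p.2}

/-- The type `A_{2n-1}` configuration condition (index set `{1,…,N}` with `N = 2n-1`). -/
def configA (N : ℕ) (lam : ℕ → ℚ) (L m : Mat) : Prop :=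
  ∀ a, 1 ≤ a → a ≤ N →
    (m.sum fun q c => (q.2 : ℚ) * c * formA a q.1)
      = (L.sum fun q c => if q.1 = a then (q.2 : ℚ) * c else 0) - lam a

/-- The type `A_{2n-1}` vacancy numbers (all scaling factors are 1). -/
def vacA (L m : Mat) (a i : ℕ) : ℚ :=
  (L.sum fun q c => if q.1 = a then ((min i q.2 : ℕ) : ℚ) * c else 0)
  - (m.sum fun q c => formA a q.1 * ((min i q.2 : ℕ) : ℚ) * c)

/-- Admissibility in type `A_{2n-1}`. -/
def admA (N : ℕ) (L m : Mat) : Prop :=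
  ∀ a i, 1 ≤ a → a ≤ N → 1 ≤ i → 0 ≤ vacA L m a i

/-- The rigging conditions in type `A_{2n-1}`. -/
def rigA (N : ℕ) (L m : Mat) (J : Rig) : Prop :=
  ∀ a i, 1 ≤ a → a ≤ N → 1 ≤ i →
    (J (a,i)).card ≤ m (a,i) ∧ ∀ x ∈ J (a,i), 0 < x ∧ (x : ℚ) ≤ vacA L m a i

/-- The quadratic part of the type `A_{2n-1}` cocharge. -/
def ccA (m : Mat) : ℚ :=
  (1/2) * m.sum fun q c => m.sum fun r d =>
    formA q.1 r.1 * ((min q.2 r.2 : ℕ) : ℚ) * c * d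

/-- The transform `m ↦ m̂`: `m̂_i^{(a)} = m̂_i^{(2n-a)} = m_i^{(a)}` for `a ≤ n-1`,
`m̂_{2i}^{(n)} = m_i^{(n)}` and `m̂_j^{(n)} = 0` for odd `j`. -/
noncomputable def hatM (n : ℕ) (m : Mat) : Mat :=
  Finsupp.onFinset
    (Finset.range (2*n+1) ×ˢ Finset.range (2 * (m.support.sup Prod.snd) + 1))
    (fun q =>
      if 1 ≤ q.1 ∧ q.1 ≤ n - 1 then m q
      else if q.1 = n ∧ q.2 % 2 = 0 then m (n, q.2 / 2)
      else if n + 1 ≤ q.1 ∧ q.1 ≤ 2*n - 1 then m (2*n - q.1, q.2)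
      else 0)
    (by
      intro q hq
      obtain ⟨a, i⟩ := q
      simp only [Finset.mem_product, Finset.mem_range]
      dsimp only at hq
      split_ifs at hq with h1 h2 h3
      · have hs : ((a, i) : ℕ × ℕ) ∈ m.support := Finsupp.mem_support_iff.2 hq
        have hle : i ≤ m.support.sup Prod.snd := Finset.le_sup (f := Prod.snd) hs
        omega
      · have hs : ((n, i / 2) : ℕ × ℕ) ∈ m.support := Finsupp.mem_support_iff.2 hq
        have hle : i / 2 ≤ m.support.sup Prod.snd := Finset.le_sup (f := Prod.snd) hs
        omega
      · have hs : ((2*n - a, i) : ℕ × ℕ) ∈ m.support := Finsupp.mem_support_iff.2 hq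
        have hle : i ≤ m.support.sup Prod.snd := Finset.le_sup (f := Prod.snd) hs
        omega
      · exact absurd rfl hq)

/-- The transform `J ↦ Ĵ`: `Ĵ^{(a,i)} = Ĵ^{(2n-a,i)} = J^{(a,i)}` for `a ≤ n-1`, and
`Ĵ^{(n,2i)}` is obtained from `J^{(n,i)}` by doubling every part. -/
noncomputable def hatJ (n : ℕ) (J : Rig) : Rig :=
  Finsupp.onFinset
    (Finset.range (2*n+1) ×ˢ Finset.range (2 * (J.support.sup Prod.snd) + 1))
    (fun q =>
      if 1 ≤ q.1 ∧ q.1 ≤ n - 1 then J q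
      else if q.1 = n ∧ q.2 % 2 = 0 then (J (n, q.2 / 2)).map (fun x => 2 * x)
      else if n + 1 ≤ q.1 ∧ q.1 ≤ 2*n - 1 then J (2*n - q.1, q.2)
      else 0)
    (by
      intro q hq
      obtain ⟨a, i⟩ := q
      simp only [Finset.mem_product, Finset.mem_range]
      dsimp only at hq
      split_ifs at hq with h1 h2 h3
      · have hs : ((a, i) : ℕ × ℕ) ∈ J.support := Finsupp.mem_support_iff.2 hq
        have hle : i ≤ J.support.sup Prod.snd := Finset.le_sup (f := Prod.snd) hs
        omega
      · rw [Ne, Multiset.map_eq_zero] at hq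
        have hs : ((n, i / 2) : ℕ × ℕ) ∈ J.support := Finsupp.mem_support_iff.2 hq
        have hle : i / 2 ≤ J.support.sup Prod.snd := Finset.le_sup (f := Prod.snd) hs
        omega
      · have hs : ((2*n - a, i) : ℕ × ℕ) ∈ J.support := Finsupp.mem_support_iff.2 hq
        have hle : i ≤ J.support.sup Prod.snd := Finset.le_sup (f := Prod.snd) hs
        omega
      · exact absurd rfl hq)

/-- The weight `λ̂`: `λ̂_a = λ̂_{2n-a} = λ_a` for `a ≤ n-1`, `λ̂_n = 2λ_n`. -/
def hatLam (n : ℕ) (lam : ℕ → ℕ) (a : ℕ) : ℚ :=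
  if 1 ≤ a ∧ a ≤ n - 1 then lam a
  else if a = n then 2 * lam n
  else if n + 1 ≤ a ∧ a ≤ 2*n - 1 then lam (2*n - a)
  else 0

/-- The set `RC^v(L, λ)` of symmetric type `A_{2n-1}` rigged configurations for the
data `(L̂, λ̂)`. -/
def RCv (n : ℕ) (lam : ℕ → ℕ) (L : Mat) : Set (Mat × Rig) :=
  {p | supIn (2*n-1) p.1 ∧ supInJ (2*n-1) p.2 ∧
       configA (2*n-1) (hatLam n lam) (hatM n L) p.1 ∧
       admA (2*n-1) (hatM n L) p.1 ∧
       rigA (2*n-1) (hatM n L) p.1 p.2 ∧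
       (∀ a i, 1 ≤ a → a ≤ n - 1 → p.1 (a, i) = p.1 (2*n - a, i) ∧
          p.2 (a, i) = p.2 (2*n - a, i)) ∧
       (∀ j, j % 2 = 1 → p.1 (n, j) = 0) ∧
       (∀ i, ∀ x ∈ p.2 (n, i), x % 2 = 0)}

-- core end

def Fq (q r : ℕ × ℕ) : ℚ := formA q.1 r.1 * ((min q.2 r.2 : ℕ) : ℚ)

def Qq (n : ℕ) (q p' : ℕ × ℕ) : ℚ :=
  if p'.1 = n then Fq q (n, 2 * p'.2) else Fq q p' + Fq q (2*n - p'.1, p'.2)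

def Pq (n : ℕ) (p p' : ℕ × ℕ) : ℚ :=
  if p.1 = n then Qq n (n, 2 * p.2) p' else Qq n p p' + Qq n (2*n - p.1, p.2) p'

lemma hatM_apply (n : ℕ) (m : Mat) (q : ℕ × ℕ) :
    hatM n m q =
      (if 1 ≤ q.1 ∧ q.1 ≤ n - 1 then m q
      else if q.1 = n ∧ q.2 % 2 = 0 then m (n, q.2 / 2)
      else if n + 1 ≤ q.1 ∧ q.1 ≤ 2*n - 1 then m (2*n - q.1, q.2)
      else 0) := rfl

lemma hat_sum {n : ℕ} (hn : 2 ≤ n) (m : Mat) (hm : supIn n m) (f : ℕ × ℕ → ℚ) :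
    (hatM n m).sum (fun q c => f q * c)
      = m.sum (fun p c =>
          (if p.1 = n then f (n, 2 * p.2) else f p + f (2*n - p.1, p.2)) * c) := by
  classical
  set S1 : Finset (ℕ × ℕ) := m.support.filter (fun p => ¬ p.1 = n) with hS1
  set S2 : Finset (ℕ × ℕ) := m.support.filter (fun p => p.1 = n) with hS2
  have hS1mem : ∀ p ∈ S1, 1 ≤ p.1 ∧ p.1 ≤ n - 1 ∧ 1 ≤ p.2 := by
    intro p hp
    rw [hS1, Finset.mem_filter, Finsupp.mem_support_iff] at hp
    have := hm p hp.1
    omega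
  have hS2mem : ∀ p ∈ S2, p.1 = n ∧ 1 ≤ p.2 := by
    intro p hp
    rw [hS2, Finset.mem_filter, Finsupp.mem_support_iff] at hp
    have := hm p hp.1
    omega
  set T : Finset (ℕ × ℕ) :=
    (S1 ∪ S1.image (fun p => (2*n - p.1, p.2))) ∪ S2.image (fun p => (p.1, 2 * p.2)) with hT
  have hsub : (hatM n m).support ⊆ T := by
    intro q hq
    rw [Finsupp.mem_support_iff, hatM_apply] at hq
    rw [hT, Finset.mem_union, Finset.mem_union]
    split_ifs at hq with h1 h2 h3
    · left; left
      rw [hS1, Finset.mem_filter, Finsupp.mem_support_iff]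
      exact ⟨hq, by omega⟩
    · right
      rw [Finset.mem_image]
      refine ⟨(n, q.2 / 2), ?_, ?_⟩
      · rw [hS2, Finset.mem_filter, Finsupp.mem_support_iff]; exact ⟨hq, rfl⟩
      · obtain ⟨a, i⟩ := q; simp only at h2 ⊢
        exact Prod.ext h2.1.symm (by omega)
    · left; right
      rw [Finset.mem_image]
      refine ⟨(2*n - q.1, q.2), ?_, ?_⟩
      · rw [hS1, Finset.mem_filter, Finsupp.mem_support_iff]
        exact ⟨hq, by omega⟩
      · obtain ⟨a, i⟩ := q; simp only at h3 ⊢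
        exact Prod.ext (by omega) rfl
    · exact absurd rfl hq
  rw [Finsupp.sum_of_support_subset _ hsub _ (by intro q _; simp)]
  have hd1 : Disjoint S1 (S1.image (fun p => (2*n - p.1, p.2))) := by
    rw [Finset.disjoint_left]
    intro q hq hq'
    rw [Finset.mem_image] at hq'
    obtain ⟨p, hp, hpe⟩ := hq'
    have h1 := hS1mem q hq
    have h2 := hS1mem p hp
    have : q.1 = 2*n - p.1 := by rw [← hpe]
    omega
  have hd2 : Disjoint (S1 ∪ S1.image (fun p => (2*n - p.1, p.2)))
      (S2.image (fun p => (p.1, 2 * p.2))) := by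
    rw [Finset.disjoint_left]
    intro q hq hq'
    rw [Finset.mem_image] at hq'
    obtain ⟨p, hp, hpe⟩ := hq'
    have h2 := hS2mem p hp
    have hq1 : q.1 = n := by rw [← hpe]; exact h2.1
    rw [Finset.mem_union] at hq
    rcases hq with hq | hq
    · have := hS1mem q hq; omega
    · rw [Finset.mem_image] at hq
      obtain ⟨p', hp', hpe'⟩ := hq
      have := hS1mem p' hp'
      have : q.1 = 2*n - p'.1 := by rw [← hpe']
      omega
  rw [hT, Finset.sum_union hd2, Finset.sum_union hd1]
  have inj1 : ∀ x ∈ S1, ∀ y ∈ S1,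
      (fun p : ℕ × ℕ => (2*n - p.1, p.2)) x = (fun p : ℕ × ℕ => (2*n - p.1, p.2)) y → x = y := by
    intro x hx y hy hxy
    have h1 := hS1mem x hx; have h2 := hS1mem y hy
    simp only [Prod.mk.injEq] at hxy
    exact Prod.ext (by omega) hxy.2
  have inj2 : ∀ x ∈ S2, ∀ y ∈ S2,
      (fun p : ℕ × ℕ => (p.1, 2 * p.2)) x = (fun p : ℕ × ℕ => (p.1, 2 * p.2)) y → x = y := by
    intro x hx y hy hxy
    simp only [Prod.mk.injEq] at hxy
    exact Prod.ext hxy.1 (by omega)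
  rw [Finset.sum_image inj1, Finset.sum_image inj2]
  -- evaluate hatM on each piece
  have ev1 : ∀ p ∈ S1, hatM n m p = m p := by
    intro p hp
    have h := hS1mem p hp
    rw [hatM_apply, if_pos ⟨h.1, h.2.1⟩]
  have ev2 : ∀ p ∈ S1, hatM n m (2*n - p.1, p.2) = m p := by
    intro p hp
    have h := hS1mem p hp
    rw [hatM_apply]
    rw [if_neg (by simp only; omega), if_neg (by simp only; omega),
      if_pos (by simp only; omega)]
    simp only
    congr 1
    exact Prod.ext (by simp only; omega) rfl
  have ev3 : ∀ p ∈ S2, hatM n m (p.1, 2 * p.2) = m p := by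
    intro p hp
    have h := hS2mem p hp
    rw [hatM_apply]
    rw [if_neg (by simp only; omega), if_pos (by simp only; omega)]
    simp only
    rw [← h.1]
    congr 1
    exact Prod.ext rfl (by simp only; omega)
  have e1 : ∑ x ∈ S1, f x * ((hatM n m x : ℕ) : ℚ) = ∑ x ∈ S1, f x * ((m x : ℕ) : ℚ) :=
    Finset.sum_congr rfl (fun p hp => by rw [ev1 p hp])
  have e2 : ∑ x ∈ S1, f (2*n - x.1, x.2) * ((hatM n m (2*n - x.1, x.2) : ℕ) : ℚ)
      = ∑ x ∈ S1, f (2*n - x.1, x.2) * ((m x : ℕ) : ℚ) :=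
    Finset.sum_congr rfl (fun p hp => by rw [ev2 p hp])
  have e3 : ∑ x ∈ S2, f (x.1, 2 * x.2) * ((hatM n m (x.1, 2 * x.2) : ℕ) : ℚ)
      = ∑ x ∈ S2, f (x.1, 2 * x.2) * ((m x : ℕ) : ℚ) :=
    Finset.sum_congr rfl (fun p hp => by rw [ev3 p hp])
  rw [e1, e2, e3]
  -- now the RHS
  rw [Finsupp.sum]
  rw [← Finset.sum_filter_add_sum_filter_not m.support (fun p => p.1 = n)]
  rw [← hS1, ← hS2]
  have r2 : ∀ p ∈ S2,
      (if p.1 = n then f (n, 2 * p.2) else f p + f (2*n - p.1, p.2)) * (m p)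
        = f (p.1, 2 * p.2) * (m p) := by
    intro p hp
    have h := hS2mem p hp
    rw [if_pos h.1, h.1]
  have r1 : ∀ p ∈ S1,
      (if p.1 = n then f (n, 2 * p.2) else f p + f (2*n - p.1, p.2)) * (m p)
        = f p * (m p) + f (2*n - p.1, p.2) * (m p) := by
    intro p hp
    have h := hS1mem p hp
    rw [if_neg (by omega)]; ring
  rw [Finset.sum_congr rfl r2, Finset.sum_congr rfl r1, Finset.sum_add_distrib]
  ring


lemma key {n : ℕ} (hn : 2 ≤ n) {a b : ℕ} (ha : 1 ≤ a) (ha' : a ≤ n) (hb : 1 ≤ b)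
    (hb' : b ≤ n) (i k : ℕ) :
    Pq n (a, i) (b, k) = 2 * (formC n a b * ((min (tC n b * i) (tC n a * k) : ℕ) : ℚ)) := by
  have m1 : min (2*i) (2*k) = 2 * min i k := by omega
  simp only [Pq, Qq, Fq, formA, formC, tC]
  split_ifs <;> try (exfalso; omega)
  all_goals simp only [one_mul, m1]
  all_goals push_cast
  all_goals ring

lemma main_calc {n : ℕ} (hn : 2 ≤ n) (m : Mat) (hm : supIn n m) :
    ccA (hatM n m)
      = (1/2) * m.sum (fun p c => m.sum fun p' d => Pq n p p' * (c:ℚ) * (d:ℚ)) := by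
  have h0 : ccA (hatM n m)
      = (1/2) * (hatM n m).sum (fun q c => (hatM n m).sum fun r d =>
          Fq q r * (c:ℚ) * (d:ℚ)) := rfl
  rw [h0]
  congr 1
  have step1 : ∀ (q : ℕ × ℕ) (c : ℕ),
      (hatM n m).sum (fun r d => Fq q r * (c:ℚ) * (d:ℚ))
        = (m.sum fun p' d => Qq n q p' * (d:ℚ)) * (c:ℚ) := by
    intro q c
    have h1 : (hatM n m).sum (fun r d => Fq q r * (c:ℚ) * (d:ℚ))
        = (hatM n m).sum (fun r d => (Fq q r * (c:ℚ)) * (d:ℚ)) := rfl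
    rw [h1, hat_sum hn m hm (fun r => Fq q r * (c:ℚ)), Finsupp.sum_mul]
    refine Finsupp.sum_congr ?_
    intro p' _
    simp only [Qq]
    split_ifs <;> ring
  calc (hatM n m).sum (fun q c => (hatM n m).sum fun r d => Fq q r * (c:ℚ) * (d:ℚ))
      = (hatM n m).sum (fun q c => (m.sum fun p' d => Qq n q p' * (d:ℚ)) * (c:ℚ)) :=
        Finsupp.sum_congr (fun q _ => step1 q _)
    _ = m.sum (fun p c =>
          (if p.1 = n then (m.sum fun p' d => Qq n (n, 2 * p.2) p' * (d:ℚ))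
           else (m.sum fun p' d => Qq n p p' * (d:ℚ))
             + (m.sum fun p' d => Qq n (2*n - p.1, p.2) p' * (d:ℚ))) * (c:ℚ)) :=
        hat_sum hn m hm (fun q => m.sum fun p' d => Qq n q p' * (d:ℚ))
    _ = m.sum (fun p c => m.sum fun p' d => Pq n p p' * (c:ℚ) * (d:ℚ)) := by
        refine Finsupp.sum_congr ?_
        intro p _
        by_cases hp : p.1 = n
        · rw [if_pos hp, Finsupp.sum_mul]
          refine Finsupp.sum_congr ?_
          intro p' _
          simp only [Pq, if_pos hp]
          ring
        · rw [if_neg hp, add_mul, Finsupp.sum_mul, Finsupp.sum_mul,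
            Finsupp.sum, Finsupp.sum, Finsupp.sum, ← Finset.sum_add_distrib]
          refine Finset.sum_congr rfl ?_
          intro p' _
          simp only [Pq, if_neg hp]
          ring

theorem statement18 (n : ℕ) (hn : 2 ≤ n) (m : Mat) (hm : supIn n m) :
    ccA (hatM n m) = 2 * ccC n m := by
  rw [main_calc hn m hm]
  unfold ccC
  suffices h : m.sum (fun p c => m.sum fun p' d => Pq n p p' * (c:ℚ) * (d:ℚ))
      = 2 * m.sum (fun q c => m.sum fun r d =>
          formC n q.1 r.1 * ((min (tC n r.1 * q.2) (tC n q.1 * r.2) : ℕ) : ℚ) * (c:ℚ) * (d:ℚ)) by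
    rw [h]; ring
  rw [Finsupp.mul_sum]
  refine Finsupp.sum_congr ?_
  intro p hp
  rw [Finsupp.mul_sum]
  refine Finsupp.sum_congr ?_
  intro p' hp'
  have b1 := hm p (Finsupp.mem_support_iff.1 hp)
  have b2 := hm p' (Finsupp.mem_support_iff.1 hp')
  obtain ⟨a, i⟩ := p
  obtain ⟨b, k⟩ := p'
  rw [key hn b1.1 b1.2.1 b2.1 b2.2.1 i k]
  ring


end Stmt18
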